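/- Let M ∈ ℕ, p ∈ [1,∞), and let K ⊆ [0,1]^M be a closed convex set. On the interval (0,M), define the projection Π(u) = (∫_{i-1}^{i} u dλ)_{i=1}^M ∈ ℝ^M and the set D_K of all u ∈ L^p(0,M) such that u has a representative v : (0,M) → ℝ with v(t) ∈ {0,1} for all t, pointwise total variation Var(v;(0,M)) ≤ M, and Π(u) ∈ K. Then {Π(u) : u ∈ D_K} = K, and consequently C_{D_K,Π} := conv{Π(u) : u ∈ D_K} = K. -/

import Mathlib

/-!
Given `x ∈ [0,1]^M`, put one switching point in each interval `[i, i+1]`: at `i + x_i` when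
`i` is even and at `i + 1 - x_i` when `i` is odd. The control that equals `1` before an even
number of switching points and `0` otherwise is `1` then `0` on even intervals and `0` then `1`
on odd ones, so its mean on `[i, i+1]` is `x_i`, while its value changes only when the counter
of passed switching points increases, hence its variation is at most `M`. Thus `Π(D_K) ⊇ K`;
the reverse inclusion is built into `D_K`, and `K` is convex.
-/

open MeasureTheory Set Filter
open scoped ENNReal

/-- The projection on `L^p(0,M)` given by `Π(u)_i = ∫_{i-1}^i u dλ`. -/
noncomputable def projK (M : ℕ) (p : ℝ≥0∞)
    (u : Lp ℝ p (volume.restrict (Ioo (0:ℝ) (M:ℝ)))) : Fin M → ℝ :=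
  fun i => ∫ t in Ioo ((i:ℕ):ℝ) (((i:ℕ):ℝ)+1), (u : ℝ → ℝ) t
    ∂(volume.restrict (Ioo (0:ℝ) (M:ℝ)))

/-- The set `D_K` of Example 3.5: binary controls on `(0,M)` with pointwise
total variation at most `M` whose vector of interval averages lies in `K`. -/
def DK (M : ℕ) (p : ℝ≥0∞) (K : Set (Fin M → ℝ)) :
    Set (Lp ℝ p (volume.restrict (Ioo (0:ℝ) (M:ℝ)))) :=
  {u | (∃ v : ℝ → ℝ,
      ((u : ℝ → ℝ) =ᵐ[volume.restrict (Ioo (0:ℝ) (M:ℝ))] v) ∧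
      (∀ t ∈ Ioo (0:ℝ) (M:ℝ), v t = 0 ∨ v t = 1) ∧
      eVariationOn v (Ioo (0:ℝ) (M:ℝ)) ≤ (M : ℝ≥0∞)) ∧
    projK M p u ∈ K}

open Finset in
theorem Monotone.eVariationOn_comp_le {α E : Type*} [LinearOrder α] [PseudoEMetricSpace E]
    {N : α → ℕ} (hN : Monotone N) {M : ℕ} (hNM : ∀ a, N a ≤ M) {g : ℕ → E}
    (hg : ∀ m n, edist (g m) (g n) ≤ 1) (s : Set α) :
    eVariationOn (g ∘ N) s ≤ M := by
  have step : ∀ m n, n ≤ m → edist (g m) (g n) ≤ ((m - n : ℕ) : ℝ≥0∞) := by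
    intro m n hnm
    rcases hnm.eq_or_lt with rfl | hlt
    · simp
    · exact (hg m n).trans (by exact_mod_cast Nat.one_le_iff_ne_zero.mpr (by omega))
  refine iSup_le fun ⟨n, u, hu, _⟩ => ?_
  calc ∑ i ∈ range n, edist (g (N (u (i + 1)))) (g (N (u i)))
      ≤ ∑ i ∈ range n, ((N (u (i + 1)) - N (u i) : ℕ) : ℝ≥0∞) :=
        sum_le_sum fun i _ => step _ _ (hN (hu i.le_succ))
    _ = ((∑ i ∈ range n, (N (u (i + 1)) - N (u i)) : ℕ) : ℝ≥0∞) := by push_cast; rfl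
    _ ≤ M := by
        rw [sum_range_tsub fun a b hab => hN (hu hab)]
        exact_mod_cast (Nat.sub_le _ _).trans (hNM _)

theorem integral_Ioo_ite_le {a b c y z : ℝ} (hac : a ≤ c) (hcb : c ≤ b) :
    ∫ t in Ioo a b, (if c ≤ t then y else z) = (c - a) * z + (b - c) * y := by
  rw [← integral_Ico_eq_integral_Ioo, ← Ico_union_Ico_eq_Ico hac hcb,
    setIntegral_union Ico_disjoint_Ico_same measurableSet_Ico
      (integrableOn_const (by simp) |>.congr_fun (fun t ht => (if_neg (not_le.mpr ht.2)).symm)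
        measurableSet_Ico)
      (integrableOn_const (by simp) |>.congr_fun (fun t ht => (if_pos ht.1).symm)
        measurableSet_Ico),
    setIntegral_congr_fun measurableSet_Ico fun t ht => if_neg (not_le.mpr ht.2),
    setIntegral_congr_fun measurableSet_Ico fun t ht => if_pos ht.1]
  simp [Real.volume_real_Ico_of_le hac, Real.volume_real_Ico_of_le hcb]

noncomputable def evenIndicator (n : ℕ) : ℝ := if Even n then 1 else 0

theorem evenIndicator_eq_zero_or_one (n : ℕ) : evenIndicator n = 0 ∨ evenIndicator n = 1 := by
  unfold evenIndicator; split_ifs <;> simp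

theorem edist_evenIndicator_le_one (m n : ℕ) : edist (evenIndicator m) (evenIndicator n) ≤ 1 := by
  rcases evenIndicator_eq_zero_or_one m with hm | hm <;>
    rcases evenIndicator_eq_zero_or_one n with hn | hn <;> simp [hm, hn, edist_dist]

section SwitchingControl

variable {M : ℕ} (s : Fin M → ℝ)

noncomputable def switchCount (t : ℝ) : ℕ := Finset.card {j | s j ≤ t}

noncomputable def switchingControl (t : ℝ) : ℝ := evenIndicator (switchCount s t)

theorem monotone_switchCount : Monotone (switchCount s) := fun _ _ hab =>
  Finset.card_le_card <| Finset.monotone_filter_right _ fun _ _ hj => hj.trans hab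

theorem switchCount_le (t : ℝ) : switchCount s t ≤ M :=
  (Finset.card_filter_le _ _).trans_eq (Finset.card_fin M)

theorem switchingControl_eq_zero_or_one (t : ℝ) :
    switchingControl s t = 0 ∨ switchingControl s t = 1 :=
  evenIndicator_eq_zero_or_one _

theorem measurable_switchingControl : Measurable (switchingControl s) :=
  measurable_from_nat.comp (monotone_switchCount s).measurable

theorem eVariationOn_switchingControl_le (S : Set ℝ) :
    eVariationOn (switchingControl s) S ≤ M :=
  (monotone_switchCount s).eVariationOn_comp_le (switchCount_le s) edist_evenIndicator_le_one S

variable {s}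

theorem switchCount_eq_of_mem_Ioo (hs : ∀ j : Fin M, s j ∈ Icc (j : ℝ) (j + 1)) (i : Fin M)
    {t : ℝ} (ht : t ∈ Ioo (i : ℝ) (i + 1)) :
    switchCount s t = if s i ≤ t then (i : ℕ) + 1 else i := by
  have hfilter : ({j | s j ≤ t} : Finset (Fin M))
      = if s i ≤ t then Finset.Iic i else Finset.Iio i := by
    ext j
    rcases lt_trichotomy j i with hji | rfl | hij
    · have hji' : (j : ℝ) + 1 ≤ i := by exact_mod_cast Fin.lt_def.mp hji
      have hsj : s j ≤ t := by linarith [(hs j).2, ht.1]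
      split_ifs <;> simp [hsj, hji, hji.le]
    · split_ifs with h <;> simp [h]
    · have hij' : (i : ℝ) + 1 ≤ j := by exact_mod_cast Fin.lt_def.mp hij
      have hsj : ¬ s j ≤ t := by linarith [(hs j).1, ht.2]
      split_ifs <;> simp [hsj, not_le.mpr hij, not_lt.mpr hij.le]
  rw [switchCount, hfilter]
  split_ifs <;> simp

theorem integral_switchingControl (hs : ∀ j : Fin M, s j ∈ Icc (j : ℝ) (j + 1)) (i : Fin M) :
    ∫ t in Ioo (i : ℝ) (i + 1), switchingControl s t
      = (s i - i) * evenIndicator i + (i + 1 - s i) * evenIndicator (i + 1) := by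
  rw [setIntegral_congr_fun measurableSet_Ioo fun t ht => show switchingControl s t
      = if s i ≤ t then evenIndicator (i + 1) else evenIndicator i by
    rw [switchingControl, switchCount_eq_of_mem_Ioo hs i ht]; split_ifs <;> rfl]
  exact integral_Ioo_ite_le (hs i).1 (hs i).2

end SwitchingControl

section SwitchPoints

variable {M : ℕ} {x : Fin M → ℝ}

noncomputable def switchPoints (x : Fin M → ℝ) (j : Fin M) : ℝ :=
  if Even (j : ℕ) then j + x j else j + 1 - x j

theorem switchPoints_mem_Icc (hx : x ∈ Icc 0 1) (j : Fin M) :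
    switchPoints x j ∈ Icc (j : ℝ) (j + 1) := by
  have h0 : 0 ≤ x j := hx.1 j
  have h1 : x j ≤ 1 := hx.2 j
  unfold switchPoints
  split_ifs <;> constructor <;> linarith

theorem integral_switchingControl_switchPoints (hx : x ∈ Icc 0 1) (i : Fin M) :
    ∫ t in Ioo (i : ℝ) (i + 1), switchingControl (switchPoints x) t = x i := by
  rw [integral_switchingControl (switchPoints_mem_Icc hx) i]
  rcases Nat.even_or_odd i with h | h
  · simp [switchPoints, evenIndicator, h, Nat.not_even_iff_odd.mpr h.add_one]
  · simp [switchPoints, evenIndicator, Nat.not_even_iff_odd.mpr h, h.add_one]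

end SwitchPoints

theorem projK_toLp {M : ℕ} {p : ℝ≥0∞} {f : ℝ → ℝ}
    (hf : MemLp f p (volume.restrict (Ioo (0 : ℝ) M))) :
    projK M p (hf.toLp f) = fun i : Fin M => ∫ t in Ioo (i : ℝ) (i + 1), f t := by
  funext i
  have hsub : Ioo (i : ℝ) (i + 1) ⊆ Ioo 0 M :=
    Ioo_subset_Ioo (Nat.cast_nonneg _) (by exact_mod_cast i.isLt)
  rw [projK, Measure.restrict_restrict measurableSet_Ioo, inter_eq_left.mpr hsub]
  exact integral_congr_ae (ae_restrict_of_ae_restrict_of_subset hsub hf.coeFn_toLp)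

theorem projK_image_DK {M : ℕ} {p : ℝ≥0∞} {K : Set (Fin M → ℝ)} (hK : K ⊆ Icc 0 1) :
    projK M p '' DK M p K = K := by
  refine Subset.antisymm (image_subset_iff.mpr fun _ hu => hu.2) fun x hx => ?_
  have hv : MemLp (switchingControl (switchPoints x)) p (volume.restrict (Ioo (0 : ℝ) M)) :=
    MemLp.of_bound (measurable_switchingControl _).aestronglyMeasurable 1 <| ae_of_all _ fun t => by
      rcases switchingControl_eq_zero_or_one (switchPoints x) t with h | h <;> simp [h]
  have hproj : projK M p (hv.toLp _) = x := by
    rw [projK_toLp]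
    exact funext (integral_switchingControl_switchPoints (hK hx))
  refine ⟨hv.toLp _, ⟨⟨_, hv.coeFn_toLp, fun t _ => switchingControl_eq_zero_or_one _ t,
    eVariationOn_switchingControl_le _ _⟩, by rwa [hproj]⟩, hproj⟩

theorem stmt_9
    (M : ℕ) (p : ℝ≥0∞)
    (K : Set (Fin M → ℝ)) (hK_convex : Convex ℝ K)
    (hK_sub : K ⊆ Icc (0 : Fin M → ℝ) 1) :
    projK M p '' DK M p K = K ∧ convexHull ℝ (projK M p '' DK M p K) = K := by
  have h := projK_image_DK (p := p) hK_sub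
  exact ⟨h, by rw [h]; exact hK_convex.convexHull_eq⟩
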